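/- (Trigonometric Ramanujan integral) Let τ ∈ ℍ, q = exp(2πiτ), and let c, d ∈ ℂ with |c|, |d| < |q|^{-1/2}. Then (1/2πi) ∮_{|z|=1} [(-q^{1/2} z^{-1}; q)_∞ (-q^{1/2} z; q)_∞ / ((-q^{1/2} c z^{-1}; q)_∞ (-q^{1/2} d z; q)_∞)] · (q;q)_∞ dz/z = (qc; q)_∞ (qd; q)_∞ / (qcd; q)_∞. -/

import Mathlib

/-!
Write `w = q^{1/2}` and `A(c, d)` for the integral. Replacing `c` by `qc` multiplies the integrand
`F(z)` by `1 + wc/z`; moving the contour to `|z| = |q|` and substituting `z ↦ qz` shows that it is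
also the integral of `F(z) (d + 1/(wz))`. Eliminating `∫ F(z) z⁻¹` gives
`A(qc, d) (1 - qc) = A(c, d) (1 - qcd)`, and iterating while `qⁿc → 0` gives
`A(0, d) (qc;q)_∞ = A(c, d) (qcd;q)_∞`. Together with the symmetry `A(c, d) = A(d, c)` (from
`z ↦ z⁻¹`) and `A(1, 1) = (q;q)_∞` this determines `A(0, d) = (qd;q)_∞`.
-/

open scoped Real

/-- The infinite q-Pochhammer symbol `(a;q)_∞ = ∏_{j=0}^∞ (1 - a q^j)`. -/
noncomputable def qPochInf (a q : ℂ) : ℂ := ∏' n : ℕ, (1 - a * q ^ n)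

open Filter Topology

section IntervalIntegral

open intervalIntegral

lemma continuousOn_parametric_intervalIntegral_of_continuousOn {X E : Type*} [TopologicalSpace X]
    [NormedAddCommGroup E] [NormedSpace ℝ E] {f : X → ℝ → E} {s : Set X}
    (hf : ContinuousOn (Function.uncurry f) (s ×ˢ Set.univ)) (a b : ℝ) :
    ContinuousOn (fun x ↦ ∫ t in a..b, f x t) s := by
  rw [continuousOn_iff_continuous_domRestrict]
  exact continuous_parametric_intervalIntegral_of_continuous' (f := fun (x : s) t ↦ f x t)
    (hf.comp_continuous (continuous_subtype_val.prodMap continuous_id) fun p ↦ ⟨p.1.2, trivial⟩)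
    a b

lemma integral_mul_const_add_mul {g h : ℝ → ℂ} (hg : Continuous g) (hh : Continuous h)
    (α β : ℂ) (a b : ℝ) :
    ∫ x in a..b, g x * (α + β * h x) = α * (∫ x in a..b, g x) + β * ∫ x in a..b, g x * h x := by
  simp only [mul_add, mul_left_comm _ β]
  rw [integral_add ((by fun_prop : Continuous fun x ↦ g x * α).intervalIntegrable _ _)
      ((by fun_prop : Continuous fun x ↦ β * (g x * h x)).intervalIntegrable _ _),
    integral_mul_const, integral_const_mul, mul_comm]

end IntervalIntegral

lemma one_add_ne_zero_of_norm_lt_one {R : Type*} [NormedRing R] [NormOneClass R] {u : R}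
    (hu : ‖u‖ < 1) : 1 + u ≠ 0 := fun h ↦ by
  rw [eq_neg_of_add_eq_zero_right h, norm_neg, norm_one] at hu
  exact hu.false

section QPochhammer

variable {a q : ℂ}

lemma summable_norm_mul_pow (hq : ‖q‖ < 1) (a : ℂ) : Summable fun n : ℕ ↦ ‖a * q ^ n‖ := by
  simpa [norm_mul, norm_pow] using
    (summable_geometric_of_lt_one (norm_nonneg q) hq).mul_left ‖a‖

lemma multipliable_qPochInf (hq : ‖q‖ < 1) (a : ℂ) : Multipliable fun n : ℕ ↦ 1 - a * q ^ n := by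
  simpa [sub_eq_add_neg] using multipliable_one_add_of_summable (f := fun n ↦ -(a * q ^ n))
    (by simpa using summable_norm_mul_pow hq a)

@[simp]
lemma qPochInf_zero_left (q : ℂ) : qPochInf 0 q = 1 := by
  simp [qPochInf]

lemma qPochInf_eq_one_sub_mul (hq : ‖q‖ < 1) (a : ℂ) :
    qPochInf a q = (1 - a) * qPochInf (a * q) q := by
  have hshift : ∀ n : ℕ, 1 - a * q * q ^ n = 1 - a * q ^ (n + 1) := fun n ↦ by ring
  rw [qPochInf, tprod_eq_zero_mul' ((multipliable_qPochInf hq (a * q)).congr hshift), qPochInf,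
    pow_zero, mul_one, tprod_congr hshift]

lemma qPochInf_ne_zero (hq : ‖q‖ < 1) (ha : ‖a‖ < 1) : qPochInf a q ≠ 0 := by
  have hfac (n : ℕ) : 1 + -(a * q ^ n) ≠ 0 := by
    refine one_add_ne_zero_of_norm_lt_one ?_
    rw [norm_neg, norm_mul, norm_pow]
    exact (mul_le_of_le_one_right (norm_nonneg a) (pow_le_one₀ (norm_nonneg q) hq.le)).trans_lt ha
  simpa [qPochInf, sub_eq_add_neg] using
    tprod_one_add_ne_zero_of_summable hfac (by simpa using summable_norm_mul_pow hq a)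

lemma differentiable_qPochInf (hq : ‖q‖ < 1) : Differentiable ℂ fun a ↦ qPochInf a q := by
  intro a₀
  have hgeom := (summable_geometric_of_lt_one (norm_nonneg q) hq).mul_left (‖a₀‖ + 1)
  have hprod : HasProdLocallyUniformlyOn (fun n a ↦ 1 + -(a * q ^ n))
      (fun a ↦ ∏' n, (1 + -(a * q ^ n))) (Metric.ball 0 (‖a₀‖ + 1)) :=
    hgeom.hasProdLocallyUniformlyOn_nat_one_add Metric.isOpen_ball (.of_forall fun n a ha ↦ by
        rw [norm_neg, norm_mul, norm_pow]
        exact mul_le_mul_of_nonneg_right (mem_ball_zero_iff.mp ha).le (by positivity))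
      fun n ↦ by fun_prop
  have hdiff := hprod.differentiableOn (.of_forall fun s ↦ by
      simpa [Finset.prod_fn] using DifferentiableOn.finsetProd fun _ _ ↦ by fun_prop)
    Metric.isOpen_ball
  simpa [qPochInf, sub_eq_add_neg] using
    hdiff.differentiableAt (Metric.isOpen_ball.mem_nhds (by simp))

lemma mul_qPochInf_eq_of_tendsto {q a b L : ℂ} {x : ℕ → ℂ} (hq : ‖q‖ < 1)
    (hrec : ∀ n, x (n + 1) * (1 - a * q ^ n) = x n * (1 - b * q ^ n))
    (hx : Tendsto x atTop (𝓝 L)) :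
    L * qPochInf a q = x 0 * qPochInf b q := by
  have htel : ∀ N, x N * ∏ k ∈ Finset.range N, (1 - a * q ^ k) =
      x 0 * ∏ k ∈ Finset.range N, (1 - b * q ^ k) := by
    intro N
    induction N with
    | zero => simp
    | succ n ih =>
      rw [Finset.prod_range_succ, Finset.prod_range_succ]
      linear_combination (∏ k ∈ Finset.range n, (1 - a * q ^ k)) * hrec n + (1 - b * q ^ n) * ih
  refine tendsto_nhds_unique (hx.mul (multipliable_qPochInf hq a).hasProd.tendsto_prod_nat) ?_
  simp_rw [htel]
  exact tendsto_const_nhds.mul (multipliable_qPochInf hq b).hasProd.tendsto_prod_nat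

end QPochhammer

local notation "𝐞 " u:max => Complex.exp (2 * (π : ℂ) * Complex.I * u)

section UnitCircle

open intervalIntegral

lemma norm_exp_two_pi_I_mul (u : ℂ) : ‖𝐞 u‖ = Real.exp (-(2 * π * u.im)) := by
  simp [Complex.norm_exp, Complex.mul_re, Complex.mul_im]

lemma norm_exp_two_pi_I_mul_ofReal (x : ℝ) : ‖𝐞 (x : ℂ)‖ = 1 := by
  simp [norm_exp_two_pi_I_mul]

lemma exp_two_pi_I_mul_add_one (u : ℂ) : 𝐞 (u + 1) = 𝐞 u := by
  rw [mul_add, mul_one, Complex.exp_add, Complex.exp_two_pi_mul_I, mul_one]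

lemma norm_exp_two_pi_I_mul_lt_one {τ : ℂ} (hτ : 0 < τ.im) : ‖𝐞 τ‖ < 1 := by
  rw [norm_exp_two_pi_I_mul, Real.exp_lt_one_iff, neg_lt_zero]
  positivity

lemma integral_comp_inv_exp_two_pi_I_mul {E : Type*} [NormedAddCommGroup E] [NormedSpace ℝ E]
    (f : ℂ → E) : ∫ x in (0 : ℝ)..1, f (𝐞 (x : ℂ))⁻¹ = ∫ x in (0 : ℝ)..1, f (𝐞 (x : ℂ)) := by
  have hper : Function.Periodic (fun x : ℝ ↦ f (𝐞 (x : ℂ))) 1 := fun x ↦ by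
    simp only [Complex.ofReal_add, Complex.ofReal_one, exp_two_pi_I_mul_add_one]
  calc ∫ x in (0 : ℝ)..1, f (𝐞 (x : ℂ))⁻¹ = ∫ x in (0 : ℝ)..1, f (𝐞 ((-x : ℝ) : ℂ)) := by
        simp only [Complex.ofReal_neg, mul_neg, Complex.exp_neg]
    _ = ∫ x in (-1 : ℝ)..0, f (𝐞 (x : ℂ)) := by
        rw [integral_comp_neg (fun x : ℝ ↦ f (𝐞 (x : ℂ))), neg_zero]
    _ = ∫ x in (0 : ℝ)..1, f (𝐞 (x : ℂ)) := by
        simpa using hper.intervalIntegral_add_eq (-1) 0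

variable {E : Type*} [NormedAddCommGroup E] [NormedSpace ℂ E]

/-- The vertical sides of the rectangle `[0, 1] × [0, Im τ]` cancel by periodicity. -/
theorem integral_comp_add_eq_of_periodic_of_differentiableOn {Φ : ℂ → E}
    (hper : ∀ u, Φ (u + 1) = Φ u) {τ : ℂ} (hτ : 0 ≤ τ.im)
    (hΦ : DifferentiableOn ℂ Φ {u | 0 ≤ u.im ∧ u.im ≤ τ.im}) :
    ∫ x in (0 : ℝ)..1, Φ (x + τ) = ∫ x in (0 : ℝ)..1, Φ x := by
  set T := τ.im
  have hrect := Complex.integral_boundary_rect_eq_zero_of_differentiableOn Φ 0 (1 + T * Complex.I)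
    (hΦ.mono fun u hu ↦ by simpa [Complex.mem_reProdIm, Set.uIcc_of_le hτ] using hu.2)
  have hvert : ∫ y in (0 : ℝ)..T, Φ (1 + y * Complex.I) = ∫ y in (0 : ℝ)..T, Φ (y * Complex.I) :=
    integral_congr fun y _ ↦ by rw [add_comm, hper]
  simp only [Complex.zero_re, Complex.zero_im, Complex.add_re, Complex.add_im, Complex.one_re,
    Complex.one_im, Complex.mul_re, Complex.mul_im, Complex.ofReal_re, Complex.ofReal_im,
    Complex.I_re, Complex.I_im, Complex.ofReal_zero, Complex.ofReal_one, zero_mul, add_zero,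
    zero_add, mul_zero, mul_one, sub_self, hvert, add_sub_cancel_right, sub_eq_zero] at hrect
  have hψ : Function.Periodic (fun s : ℝ ↦ Φ (s + T * Complex.I)) 1 := fun s ↦ by
    simpa only [Complex.ofReal_add, Complex.ofReal_one, add_right_comm] using
      hper (s + T * Complex.I)
  calc ∫ x in (0 : ℝ)..1, Φ (x + τ) = ∫ x in (0 : ℝ)..1, Φ (↑(x + τ.re) + T * Complex.I) := by
        refine integral_congr fun x _ ↦ congrArg Φ (Complex.ext (by simp) (by simp [T]))
    _ = ∫ x in (0 : ℝ)..1, Φ (x + T * Complex.I) := by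
        rw [integral_comp_add_right (fun s : ℝ ↦ Φ (s + T * Complex.I)), zero_add,
          add_comm 1, hψ.intervalIntegral_add_eq τ.re 0, zero_add]
    _ = ∫ x in (0 : ℝ)..1, Φ x := hrect.symm

theorem integral_comp_mul_exp_two_pi_I_mul {f : ℂ → E} {τ : ℂ} (hτ : 0 ≤ τ.im)
    (hf : DifferentiableOn ℂ f {z | ‖𝐞 τ‖ ≤ ‖z‖ ∧ ‖z‖ ≤ 1}) :
    ∫ x in (0 : ℝ)..1, f (𝐞 τ * 𝐞 (x : ℂ)) = ∫ x in (0 : ℝ)..1, f (𝐞 (x : ℂ)) := by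
  have hmaps : Set.MapsTo (fun u ↦ 𝐞 u) {u | 0 ≤ u.im ∧ u.im ≤ τ.im}
      {z | ‖𝐞 τ‖ ≤ ‖z‖ ∧ ‖z‖ ≤ 1} := fun u ⟨h₀, h₁⟩ ↦ by
    simp only [Set.mem_ofPred_eq, norm_exp_two_pi_I_mul, Real.exp_le_exp, Real.exp_le_one_iff]
    constructor <;> nlinarith [Real.pi_pos]
  have h := integral_comp_add_eq_of_periodic_of_differentiableOn (Φ := fun u ↦ f (𝐞 u))
    (fun u ↦ by simp only [exp_two_pi_I_mul_add_one]) hτ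
    (hf.comp (by fun_prop) hmaps)
  simpa only [← Complex.exp_add, mul_add, add_comm] using h

end UnitCircle

section Integrand

variable {w q c d z : ℂ}

-- `w` plays the role of `q^{1/2}`.
noncomputable def ramanujanIntegrand (w q c d z : ℂ) : ℂ :=
  qPochInf (-w * z⁻¹) q * qPochInf (-w * z) q * qPochInf q q /
    (qPochInf (-w * c * z⁻¹) q * qPochInf (-w * d * z) q)

lemma ramanujanIntegrand_inv (w q c d z : ℂ) :
    ramanujanIntegrand w q c d z⁻¹ = ramanujanIntegrand w q d c z := by
  simp only [ramanujanIntegrand, inv_inv]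
  ring

lemma ramanujanIntegrand_one_one (hq : ‖q‖ < 1) (hw : ‖w‖ < 1) (hz : ‖z‖ = 1) :
    ramanujanIntegrand w q 1 1 z = qPochInf q q := by
  have h₁ : qPochInf (-w * z⁻¹) q ≠ 0 := qPochInf_ne_zero hq (by simpa [hz] using hw)
  have h₂ : qPochInf (-w * z) q ≠ 0 := qPochInf_ne_zero hq (by simpa [hz] using hw)
  rw [ramanujanIntegrand, mul_one]
  exact mul_div_cancel_left₀ _ (mul_ne_zero h₁ h₂)

lemma ramanujanIntegrand_q_mul_left (hq : ‖q‖ < 1) (hc : ‖w * c‖ < ‖z‖) :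
    ramanujanIntegrand w q (q * c) d z = ramanujanIntegrand w q c d z * (1 + w * c * z⁻¹) := by
  have hz : z ≠ 0 := norm_pos_iff.mp ((norm_nonneg _).trans_lt hc)
  have hX : 1 + w * c * z⁻¹ ≠ 0 := by
    refine one_add_ne_zero_of_norm_lt_one ?_
    rwa [norm_mul, norm_inv, ← div_eq_mul_inv, div_lt_one (norm_pos_iff.mpr hz)]
  have hC : qPochInf (-w * c * z⁻¹) q = (1 + w * c * z⁻¹) * qPochInf (-w * (q * c) * z⁻¹) q := by
    rw [qPochInf_eq_one_sub_mul hq, show -w * c * z⁻¹ * q = -w * (q * c) * z⁻¹ by ring]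
    ring
  rw [ramanujanIntegrand, ramanujanIntegrand, hC, mul_assoc (1 + w * c * z⁻¹),
    div_mul_eq_mul_div, mul_comm _ (1 + w * c * z⁻¹), mul_div_mul_left _ _ hX]

lemma ramanujanIntegrand_q_mul_left_q_mul (hq : ‖q‖ < 1) (hw : w ^ 2 = q) (hw₀ : w ≠ 0)
    (hz : z ≠ 0) (hd : 1 + w * d * z ≠ 0) :
    ramanujanIntegrand w q (q * c) d (q * z) =
      ramanujanIntegrand w q c d z * (d + (w * z)⁻¹) := by
  have hA : qPochInf (-w * (q * z)⁻¹) q = (1 + (w * z)⁻¹) * qPochInf (-w * z⁻¹) q := by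
    rw [qPochInf_eq_one_sub_mul hq, ← hw]
    congr 1
    · field_simp
      ring
    · congr 1
      field_simp
  have hB : qPochInf (-w * z) q = (1 + w * z) * qPochInf (-w * (q * z)) q := by
    rw [qPochInf_eq_one_sub_mul hq, show -w * z * q = -w * (q * z) by ring]
    ring
  have hD : qPochInf (-w * d * z) q = (1 + w * d * z) * qPochInf (-w * d * (q * z)) q := by
    rw [qPochInf_eq_one_sub_mul hq, show -w * d * z * q = -w * d * (q * z) by ring]
    ring
  have hC : -w * (q * c) * (q * z)⁻¹ = -w * c * z⁻¹ := by
    rw [← hw]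
    field_simp
  have hs : 1 + (w * z)⁻¹ = (1 + w * z) * (d + (w * z)⁻¹) / (1 + w * d * z) := by
    rw [eq_div_iff hd]
    field_simp
    ring
  rw [ramanujanIntegrand, ramanujanIntegrand, hA, hB, hD, hC, hs]
  generalize 1 + w * z = u, 1 + w * d * z = v, d + (w * z)⁻¹ = s
  ring

lemma differentiableAt_ramanujanIntegrand (hq : ‖q‖ < 1) (hc : ‖w * c‖ < ‖z‖)
    (hd : ‖w * d * z‖ < 1) :
    DifferentiableAt ℂ (fun p : ℂ × ℂ ↦ ramanujanIntegrand w q p.1 d p.2) (c, z) := by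
  have hz : z ≠ 0 := norm_pos_iff.mp ((norm_nonneg _).trans_lt hc)
  have hP := differentiable_qPochInf hq
  have hden : qPochInf (-w * c * z⁻¹) q * qPochInf (-w * d * z) q ≠ 0 := by
    refine mul_ne_zero (qPochInf_ne_zero hq ?_) (qPochInf_ne_zero hq (by simpa using hd))
    rw [norm_mul, norm_inv, neg_mul, norm_neg]
    rwa [← div_eq_mul_inv, div_lt_one (norm_pos_iff.mpr hz)]
  unfold ramanujanIntegrand
  fun_prop (disch := assumption)

end Integrand

section RamanujanIntegral

open intervalIntegral

variable {τ w q c d : ℂ}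

noncomputable def ramanujanIntegral (w q c d : ℂ) : ℂ :=
  ∫ x in (0 : ℝ)..1, ramanujanIntegrand w q c d (𝐞 (x : ℂ))

lemma norm_lt_one_of_sq_eq (hq : ‖q‖ < 1) (hw : w ^ 2 = q) : ‖w‖ < 1 := by
  rw [← hw, norm_pow] at hq
  exact (sq_lt_one_iff₀ (norm_nonneg w)).mp hq

lemma continuousOn_ramanujanIntegrand_circle (hq : ‖q‖ < 1) (hd : ‖w * d‖ < 1) :
    ContinuousOn (fun p : ℂ × ℝ ↦ ramanujanIntegrand w q p.1 d (𝐞 (p.2 : ℂ)))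
      ({c | ‖w * c‖ < 1} ×ˢ Set.univ) := by
  rintro ⟨c, x⟩ ⟨hc, -⟩
  have hF := differentiableAt_ramanujanIntegrand (c := c) (d := d) (z := 𝐞 (x : ℂ)) hq
    (by rwa [norm_exp_two_pi_I_mul_ofReal])
    (by rwa [norm_mul, norm_exp_two_pi_I_mul_ofReal, mul_one])
  exact (ContinuousAt.comp (x := (c, x)) (f := fun p : ℂ × ℝ ↦ (p.1, 𝐞 (p.2 : ℂ)))
    hF.continuousAt (by fun_prop)).continuousWithinAt

lemma continuous_ramanujanIntegrand_circle (hq : ‖q‖ < 1) (hc : ‖w * c‖ < 1)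
    (hd : ‖w * d‖ < 1) : Continuous fun x : ℝ ↦ ramanujanIntegrand w q c d (𝐞 (x : ℂ)) :=
  (continuousOn_ramanujanIntegrand_circle hq hd).comp_continuous (f := fun x : ℝ ↦ (c, x))
    (by fun_prop) fun _ ↦ ⟨hc, trivial⟩

lemma continuousOn_ramanujanIntegral (hq : ‖q‖ < 1) (hd : ‖w * d‖ < 1) :
    ContinuousOn (fun c ↦ ramanujanIntegral w q c d) {c | ‖w * c‖ < 1} :=
  continuousOn_parametric_intervalIntegral_of_continuousOn
    (f := fun c x ↦ ramanujanIntegrand w q c d (𝐞 (x : ℂ)))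
    (continuousOn_ramanujanIntegrand_circle hq hd) 0 1

lemma ramanujanIntegral_q_mul_left (hτ : 0 < τ.im) (hq : q = 𝐞 τ) (hw : w ^ 2 = q)
    (hc : ‖w * c‖ < 1) (hd : ‖w * d‖ < 1) :
    ramanujanIntegral w q (q * c) d * (1 - q * c) =
      ramanujanIntegral w q c d * (1 - q * c * d) := by
  have hq₁ : ‖q‖ < 1 := hq ▸ norm_exp_two_pi_I_mul_lt_one hτ
  have hq₀ : q ≠ 0 := hq ▸ Complex.exp_ne_zero _
  have hw₀ : w ≠ 0 := by rintro rfl; exact hq₀ (by simp [← hw])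
  have hF := continuous_ramanujanIntegrand_circle hq₁ hc hd
  have hinv : Continuous fun x : ℝ ↦ (𝐞 (x : ℂ))⁻¹ :=
    Continuous.inv₀ (by fun_prop) fun _ ↦ Complex.exp_ne_zero _
  set B := ∫ x in (0 : ℝ)..1, ramanujanIntegrand w q c d (𝐞 (x : ℂ)) * (𝐞 (x : ℂ))⁻¹
  have hcircle : ramanujanIntegral w q (q * c) d = 1 * ramanujanIntegral w q c d + w * c * B := by
    rw [ramanujanIntegral, ramanujanIntegral, ← integral_mul_const_add_mul hF hinv]
    refine integral_congr fun x _ ↦ ?_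
    rw [ramanujanIntegrand_q_mul_left hq₁ (by rwa [norm_exp_two_pi_I_mul_ofReal]), mul_assoc]
  have hannulus : DifferentiableOn ℂ (ramanujanIntegrand w q (q * c) d)
      {z | ‖𝐞 τ‖ ≤ ‖z‖ ∧ ‖z‖ ≤ 1} := fun z ⟨hz₁, hz₂⟩ ↦ by
    rw [← hq] at hz₁
    have hlt : ‖w * (q * c)‖ < ‖z‖ := by
      rw [mul_left_comm, norm_mul]
      exact (mul_lt_of_lt_one_right (norm_pos_iff.mpr hq₀) hc).trans_le hz₁
    have hle : ‖w * d * z‖ < 1 := by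
      rw [norm_mul]
      exact (mul_le_of_le_one_right (norm_nonneg _) hz₂).trans_lt hd
    exact ((differentiableAt_ramanujanIntegrand hq₁ hlt hle).comp z
      ((differentiableAt_const _).prodMk differentiableAt_id)).differentiableWithinAt
  have hshifted : ramanujanIntegral w q (q * c) d = d * ramanujanIntegral w q c d + w⁻¹ * B := by
    rw [ramanujanIntegral, ← integral_comp_mul_exp_two_pi_I_mul hτ.le hannulus, ← hq,
      ramanujanIntegral, ← integral_mul_const_add_mul hF hinv]
    refine integral_congr fun x _ ↦ ?_
    have hd' : 1 + w * d * 𝐞 (x : ℂ) ≠ 0 := one_add_ne_zero_of_norm_lt_one (by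
      rwa [norm_mul, norm_exp_two_pi_I_mul_ofReal, mul_one])
    rw [ramanujanIntegrand_q_mul_left_q_mul hq₁ hw hw₀ (Complex.exp_ne_zero _) hd', mul_inv]
  have hw₂ : w * w⁻¹ = 1 := mul_inv_cancel₀ hw₀
  linear_combination hcircle - q * c * hshifted + c * B * w⁻¹ * hw - c * w * B * hw₂

lemma ramanujanIntegral_zero_left_mul (hτ : 0 < τ.im) (hq : q = 𝐞 τ) (hw : w ^ 2 = q)
    (hc : ‖w * c‖ < 1) (hd : ‖w * d‖ < 1) :
    ramanujanIntegral w q 0 d * qPochInf (q * c) q =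
      ramanujanIntegral w q c d * qPochInf (q * c * d) q := by
  have hq₁ : ‖q‖ < 1 := hq ▸ norm_exp_two_pi_I_mul_lt_one hτ
  have hcn : ∀ n : ℕ, ‖w * (q ^ n * c)‖ < 1 := fun n ↦ by
    rw [mul_left_comm, norm_mul, norm_pow]
    exact (mul_le_of_le_one_left (norm_nonneg _) (pow_le_one₀ (norm_nonneg q) hq₁.le)).trans_lt hc
  have hlim : Tendsto (fun n : ℕ ↦ ramanujanIntegral w q (q ^ n * c) d) atTop
      (𝓝 (ramanujanIntegral w q 0 d)) := by
    have hcont := (continuousOn_ramanujanIntegral hq₁ hd).continuousAt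
      ((isOpen_lt (by fun_prop) continuous_const).mem_nhds (by simp : ‖w * 0‖ < 1))
    have hqn : Tendsto (fun n : ℕ ↦ q ^ n * c) atTop (𝓝 0) := by
      simpa using (tendsto_pow_atTop_nhds_zero_of_norm_lt_one hq₁).mul_const c
    exact hcont.tendsto.comp hqn
  simpa using mul_qPochInf_eq_of_tendsto hq₁ (fun n ↦ by
    have h := ramanujanIntegral_q_mul_left hτ hq hw (hcn n) hd
    rw [show q * (q ^ n * c) = q ^ (n + 1) * c by ring] at h
    linear_combination h) hlim

lemma ramanujanIntegral_comm (w q c d : ℂ) :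
    ramanujanIntegral w q c d = ramanujanIntegral w q d c := by
  simp only [ramanujanIntegral, ← ramanujanIntegrand_inv w q c d,
    integral_comp_inv_exp_two_pi_I_mul (ramanujanIntegrand w q c d)]

lemma ramanujanIntegral_one_one (hq : ‖q‖ < 1) (hw : ‖w‖ < 1) :
    ramanujanIntegral w q 1 1 = qPochInf q q := by
  rw [ramanujanIntegral, integral_congr fun x _ ↦
    ramanujanIntegrand_one_one hq hw (norm_exp_two_pi_I_mul_ofReal x)]
  simp

lemma ramanujanIntegral_zero_left (hτ : 0 < τ.im) (hq : q = 𝐞 τ) (hw : w ^ 2 = q)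
    (hd : ‖w * d‖ < 1) : ramanujanIntegral w q 0 d = qPochInf (q * d) q := by
  have hq₁ : ‖q‖ < 1 := hq ▸ norm_exp_two_pi_I_mul_lt_one hτ
  have hw₁ : ‖w * 1‖ < 1 := by simpa using norm_lt_one_of_sq_eq hq₁ hw
  have hw₀ : ‖w * 0‖ < 1 := by simp
  have hQ : qPochInf q q ≠ 0 := qPochInf_ne_zero hq₁ hq₁
  have h₁₁ := ramanujanIntegral_zero_left_mul hτ hq hw hw₁ hw₁
  have h₁₀ := ramanujanIntegral_zero_left_mul hτ hq hw hw₁ hw₀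
  have hd₀ := ramanujanIntegral_zero_left_mul hτ hq hw hd hw₀
  simp only [mul_one, mul_zero, qPochInf_zero_left,
    ramanujanIntegral_one_one hq₁ (by simpa using hw₁)] at h₁₁ h₁₀ hd₀
  have h₀₁ : ramanujanIntegral w q 0 1 = qPochInf q q := mul_right_cancel₀ hQ h₁₁
  have h₀₀ : ramanujanIntegral w q 0 0 = 1 := mul_right_cancel₀ hQ (by
    rw [h₁₀, ramanujanIntegral_comm, h₀₁, one_mul])
  rw [ramanujanIntegral_comm, ← hd₀, h₀₀, one_mul]

end RamanujanIntegral

lemma norm_mul_lt_one_of_lt_rpow {w q c : ℂ} (hw : w ^ 2 = q) (hw₀ : w ≠ 0)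
    (hc : ‖c‖ < ‖q‖ ^ (-(1 / 2) : ℝ)) : ‖w * c‖ < 1 := by
  have hsqrt : ‖q‖ ^ (-(1 / 2) : ℝ) = ‖w‖⁻¹ := by
    rw [← hw, norm_pow, ← Real.rpow_natCast_mul (norm_nonneg w)]
    norm_num [Real.rpow_neg_one]
  rw [hsqrt] at hc
  calc ‖w * c‖ < ‖w‖ * ‖w‖⁻¹ := by
        rw [norm_mul]
        exact mul_lt_mul_of_pos_left hc (norm_pos_iff.mpr hw₀)
    _ = 1 := mul_inv_cancel₀ (norm_ne_zero_iff.mpr hw₀)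

/-- The trigonometric Ramanujan integral: for `τ ∈ ℍ`, `q = exp(2πiτ)` and
`|c|,|d| < |q|^{-1/2}`, the contour integral over the unit circle
(parametrised by `z = e^{2πix}`, so that `(1/2πi)∮ f(z) dz/z = ∫₀¹ f(e^{2πix}) dx`)
of `(q;q)_∞ (-q^{1/2}z^{-1};q)_∞ (-q^{1/2}z;q)_∞ /
((-q^{1/2}cz^{-1};q)_∞ (-q^{1/2}dz;q)_∞)` equals
`(qc;q)_∞ (qd;q)_∞ / (qcd;q)_∞`. -/
theorem trigonometric_ramanujan_integral (τ c d : ℂ) (hτ : 0 < τ.im)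
    (q : ℂ) (hq : q = Complex.exp (2 * (π : ℂ) * Complex.I * τ))
    (hc : ‖c‖ < ‖q‖ ^ (-(1 / 2) : ℝ)) (hd : ‖d‖ < ‖q‖ ^ (-(1 / 2) : ℝ)) :
    (∫ x in (0 : ℝ)..1,
      (qPochInf (-(Complex.exp ((π : ℂ) * Complex.I * τ)) *
          (Complex.exp (2 * (π : ℂ) * Complex.I * (x : ℂ)))⁻¹) q *
        qPochInf (-(Complex.exp ((π : ℂ) * Complex.I * τ)) *
          Complex.exp (2 * (π : ℂ) * Complex.I * (x : ℂ))) q *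
        qPochInf q q) /
      (qPochInf (-(Complex.exp ((π : ℂ) * Complex.I * τ)) * c *
          (Complex.exp (2 * (π : ℂ) * Complex.I * (x : ℂ)))⁻¹) q *
        qPochInf (-(Complex.exp ((π : ℂ) * Complex.I * τ)) * d *
          Complex.exp (2 * (π : ℂ) * Complex.I * (x : ℂ))) q)) =
    qPochInf (q * c) q * qPochInf (q * d) q / qPochInf (q * c * d) q := by
  set w := Complex.exp ((π : ℂ) * Complex.I * τ)
  have hw : w ^ 2 = q := by
    rw [hq, ← Complex.exp_nat_mul]
    ring_nf
  have hw₀ : w ≠ 0 := Complex.exp_ne_zero _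
  have hwc := norm_mul_lt_one_of_lt_rpow hw hw₀ hc
  have hwd := norm_mul_lt_one_of_lt_rpow hw hw₀ hd
  have hqcd : qPochInf (q * c * d) q ≠ 0 := by
    refine qPochInf_ne_zero (hq ▸ norm_exp_two_pi_I_mul_lt_one hτ) ?_
    rw [← hw, show w ^ 2 * c * d = (w * c) * (w * d) by ring, norm_mul]
    exact mul_lt_one_of_nonneg_of_lt_one_left (norm_nonneg _) hwc hwd.le
  change ramanujanIntegral w q c d = _
  rw [eq_div_iff hqcd, ← ramanujanIntegral_zero_left_mul hτ hq hw hwc hwd,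
    ramanujanIntegral_zero_left hτ hq hw hwd, mul_comm]
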